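/- arXiv:2210.16160 — 2 statements merged into one kernel-verified Lean document; each statement's English description precedes it below -/
import Mathlib

section
/- For every formula F of CPL₀, the measure μ(⟦F⟧) under the fair-coin product measure is a dyadic rational: there exist m, n ∈ ℕ with μ(⟦F⟧) = m / 2^n. -/
open MeasureTheory Set
open scoped Classical ENNReal

/-- `μ` is the fair-coin (Bernoulli 1/2) product measure on Cantor space:
a probability measure giving each finite coordinate constraint measure `(1/2)^n`. -/
def IsFairCoin (μ : Measure (ℕ → Bool)) : Prop :=
  IsProbabilityMeasure μ ∧
  ∀ (s : Finset ℕ) (b : ℕ → Bool),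
    μ {ω | ∀ i ∈ s, ω i = b i} = (1 / 2 : ℝ≥0∞) ^ s.card


/-- Formulas of univariate counting propositional logic CPL₀. -/
inductive CPL where
  | atom : ℕ → CPL
  | neg : CPL → CPL
  | conj : CPL → CPL → CPL
  | disj : CPL → CPL → CPL
  | C : ℚ → CPL → CPL
  | D : ℚ → CPL → CPL

/-- Interpretation of CPL₀ formulas as subsets of Cantor space. -/
noncomputable def interp (μ : Measure (ℕ → Bool)) : CPL → Set (ℕ → Bool)
  | .atom i => {ω | ω i = true}
  | .neg F => (interp μ F)ᶜ
  | .conj F G => interp μ F ∩ interp μ G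
  | .disj F G => interp μ F ∪ interp μ G
  | .C q F => if μ (interp μ F) ≥ ENNReal.ofReal (q : ℝ) then Set.univ else ∅
  | .D q F => if μ (interp μ F) < ENNReal.ofReal (q : ℝ) then Set.univ else ∅


def DependsOnFin (A : Set (ℕ → Bool)) (s : Finset ℕ) : Prop :=
  ∀ ω ω' : ℕ → Bool, (∀ i ∈ s, ω i = ω' i) → (ω ∈ A ↔ ω' ∈ A)

lemma dependsOn_mono {A : Set (ℕ → Bool)} {s t : Finset ℕ} (hst : s ⊆ t)
    (h : DependsOnFin A s) : DependsOnFin A t :=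
  fun ω ω' hag => h ω ω' fun i hi => hag i (hst hi)

lemma cyl_measurable (s : Finset ℕ) (b : ℕ → Bool) :
    MeasurableSet {ω : ℕ → Bool | ∀ i ∈ s, ω i = b i} := by
  have : {ω : ℕ → Bool | ∀ i ∈ s, ω i = b i} = ⋂ i ∈ s, {ω : ℕ → Bool | ω i = b i} := by
    ext ω; simp
  rw [this]
  refine MeasurableSet.biInter s.countable_toSet fun i _ => ?_
  exact (measurable_pi_apply (X := fun _ : ℕ => Bool) i) (measurableSet_singleton (b i))

lemma measure_dependsOn {μ : Measure (ℕ → Bool)} (hμ : IsFairCoin μ)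
    {A : Set (ℕ → Bool)} {s : Finset ℕ} (h : DependsOnFin A s) :
    ∃ m : ℕ, μ A = (m : ℝ≥0∞) / 2 ^ s.card := by
  classical
  set ext : ({i // i ∈ s} → Bool) → (ℕ → Bool) :=
    fun f i => if hi : i ∈ s then f ⟨i, hi⟩ else false with hext
  set Cyl : ({i // i ∈ s} → Bool) → Set (ℕ → Bool) :=
    fun f => {ω | ∀ i ∈ s, ω i = ext f i} with hCyl
  set T : Finset ({i // i ∈ s} → Bool) := Finset.univ.filter (fun f => ext f ∈ A) with hT
  have hA : A = ⋃ f ∈ T, Cyl f := by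
    ext ω
    simp only [Set.mem_iUnion, hT, Finset.mem_filter, Finset.mem_univ, true_and, exists_prop]
    constructor
    · intro hω
      refine ⟨fun i => ω i.1, ?_, ?_⟩
      · exact (h ω _ (fun i hi => by simp [hext, hi])).mp hω
      · intro i hi; simp [hCyl, hext, hi]
    · rintro ⟨f, hf, hc⟩
      exact (h ω (ext f) hc).mpr hf
  have hdisj : (↑T : Set ({i // i ∈ s} → Bool)).PairwiseDisjoint Cyl := by
    intro f _ g _ hfg
    refine Set.disjoint_left.mpr fun ω hf hg => hfg ?_
    funext i
    have h1 := hf i.1 i.2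
    have h2 := hg i.1 i.2
    simp only [hext, i.2, dif_pos] at h1 h2
    rw [← h1, ← h2]
  have hmeas : ∀ f ∈ T, MeasurableSet (Cyl f) := fun f _ => cyl_measurable s (ext f)
  refine ⟨T.card, ?_⟩
  rw [hA, measure_biUnion_finset hdisj hmeas]
  have : ∀ f ∈ T, μ (Cyl f) = (1 / 2 : ℝ≥0∞) ^ s.card := fun f _ => hμ.2 s (ext f)
  rw [Finset.sum_congr rfl this, Finset.sum_const, nsmul_eq_mul]
  rw [one_div, ← ENNReal.inv_pow, div_eq_mul_inv]

lemma exists_dependsOn (μ : Measure (ℕ → Bool)) (F : CPL) :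
    ∃ s : Finset ℕ, DependsOnFin (interp μ F) s := by
  induction F with
  | atom i =>
      exact ⟨{i}, fun ω ω' h => by
        simp [interp, h i (Finset.mem_singleton_self i)]⟩
  | neg F ih =>
      obtain ⟨s, hs⟩ := ih
      exact ⟨s, fun ω ω' h => by simp [interp, hs ω ω' h]⟩
  | conj F G ihF ihG =>
      obtain ⟨s, hs⟩ := ihF; obtain ⟨t, ht⟩ := ihG
      refine ⟨s ∪ t, fun ω ω' h => ?_⟩
      have h1 := dependsOn_mono Finset.subset_union_left hs ω ω' h
      have h2 := dependsOn_mono Finset.subset_union_right ht ω ω' h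
      simp [interp, h1, h2]
  | disj F G ihF ihG =>
      obtain ⟨s, hs⟩ := ihF; obtain ⟨t, ht⟩ := ihG
      refine ⟨s ∪ t, fun ω ω' h => ?_⟩
      have h1 := dependsOn_mono Finset.subset_union_left hs ω ω' h
      have h2 := dependsOn_mono Finset.subset_union_right ht ω ω' h
      simp [interp, h1, h2]
  | C q F _ =>
      refine ⟨∅, fun ω ω' h => ?_⟩
      simp only [interp]; split <;> simp
  | D q F _ =>
      refine ⟨∅, fun ω ω' h => ?_⟩
      simp only [interp]; split <;> simp

theorem stmt_4 (μ : Measure (ℕ → Bool)) (hμ : IsFairCoin μ) (F : CPL) :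
    ∃ m n : ℕ, μ (interp μ F) = (m : ℝ≥0∞) / 2 ^ n := by
  obtain ⟨s, hs⟩ := exists_dependsOn μ F
  obtain ⟨m, hm⟩ := measure_dependsOn hμ hs
  exact ⟨m, s.card, hm⟩
end

section
/- Let D = C₁ ∨ … ∨ Cₙ be a 'measurable normal form' formula: each Cⱼ is a conjunction of mⱼ literals with pairwise distinct variables (no variable repeated or occurring both positively and negatively within Cⱼ), and each pair of distinct disjuncts is mutually contradictory. Then μ(⟦D⟧) = Σⱼ 1/2^{mⱼ}. -/
open MeasureTheory Set
open scoped Classical ENNReal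

theorem stmt_9 (μ : Measure (ℕ → Bool)) (hμ : IsFairCoin μ)
    (n : ℕ) (m : Fin n → ℕ)
    (var : ∀ j : Fin n, Fin (m j) → ℕ) (sgn : ∀ j : Fin n, Fin (m j) → Bool)
    (hinj : ∀ j : Fin n, Function.Injective (var j))
    (hcontra : ∀ j k : Fin n, j ≠ k → ∃ i : ℕ,
      ((∃ a, var j a = i ∧ sgn j a = true) ∧ (∃ b, var k b = i ∧ sgn k b = false)) ∨
      ((∃ a, var j a = i ∧ sgn j a = false) ∧ (∃ b, var k b = i ∧ sgn k b = true))) :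
    μ (⋃ j : Fin n, {ω | ∀ a : Fin (m j), ω (var j a) = sgn j a}) =
      ∑ j : Fin n, (1 / 2 : ℝ≥0∞) ^ (m j) := by
  have hmeas : ∀ j : Fin n,
      MeasurableSet {ω : ℕ → Bool | ∀ a : Fin (m j), ω (var j a) = sgn j a} := by
    intro j
    have : {ω : ℕ → Bool | ∀ a : Fin (m j), ω (var j a) = sgn j a}
        = ⋂ a : Fin (m j), {ω : ℕ → Bool | ω (var j a) = sgn j a} := by
      ext ω; simp [Set.mem_iInter]
    rw [this]
    refine MeasurableSet.iInter fun a => ?_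
    have hm : Measurable fun ω : ℕ → Bool => ω (var j a) := measurable_pi_apply _
    exact hm (MeasurableSet.singleton (sgn j a))
  have hdisj : Pairwise (Function.onFun Disjoint
      (fun j : Fin n => {ω : ℕ → Bool | ∀ a : Fin (m j), ω (var j a) = sgn j a})) := by
    intro j k hjk
    refine Set.disjoint_left.mpr ?_
    intro ω hj hk
    obtain ⟨i, h⟩ := hcontra j k hjk
    rcases h with ⟨⟨a, hva, hsa⟩, ⟨b, hvb, hsb⟩⟩ | ⟨⟨a, hva, hsa⟩, ⟨b, hvb, hsb⟩⟩ <;>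
    · have h1 := hj a
      have h2 := hk b
      rw [hva, hsa] at h1
      rw [hvb, hsb] at h2
      rw [h1] at h2
      exact Bool.noConfusion h2
  rw [measure_iUnion hdisj hmeas]
  rw [tsum_fintype]
  refine Finset.sum_congr rfl fun j _ => ?_
  -- compute the measure of one conjunction
  set s : Finset ℕ := Finset.image (var j) Finset.univ with hs
  have hcard : s.card = m j := by
    rw [hs, Finset.card_image_of_injective _ (hinj j), Finset.card_univ, Fintype.card_fin]
  set b : ℕ → Bool := fun i =>
    if h : ∃ a : Fin (m j), var j a = i then sgn j h.choose else false with hb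
  have hbval : ∀ a : Fin (m j), b (var j a) = sgn j a := by
    intro a
    have h : ∃ a' : Fin (m j), var j a' = var j a := ⟨a, rfl⟩
    have := h.choose_spec
    have ha : h.choose = a := hinj j this
    simp only [hb, dif_pos h, ha]
  have hset : {ω : ℕ → Bool | ∀ a : Fin (m j), ω (var j a) = sgn j a}
      = {ω | ∀ i ∈ s, ω i = b i} := by
    ext ω
    constructor
    · intro hω i hi
      rw [hs] at hi
      obtain ⟨a, -, rfl⟩ := Finset.mem_image.mp hi
      rw [hω a, hbval a]
    · intro hω a
      have hi : var j a ∈ s := Finset.mem_image.mpr ⟨a, Finset.mem_univ _, rfl⟩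
      rw [hω _ hi, hbval a]
  rw [hset, hμ.2 s b, hcard]
end
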